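/- Let A = (Σ, Q, δ) be a strongly connected semi-automaton with n states. If sc(Syn(A)) = 2^n - n, then A is completely reachable. -/

import Mathlib

/-!
The Nerode class of a word `w` with respect to `Syn(A)` depends only on the image `Q·w`, and all
synchronizing words form a single class. Hence the classes are at most the nonempty non-singleton
subsets of `Q` plus one, that is `2^n - n`. Equality forces every nonempty non-singleton subset to
be an image `Q·w` and `A` to be synchronizing; strong connectivity then moves the synchronized
state anywhere, so every singleton is an image too.
-/

open Finset

universe u v

variable {Q : Type u} {A : Type v}

/-- Extended transition function on words (lists of letters). -/
def dw (δ : Q → A → Q) (q : Q) (w : List A) : Q := w.foldl δ q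

/-- A subset `S` of the state set is reachable if it is the image of the
full state set under some word. -/
def reach [Fintype Q] [DecidableEq Q] (δ : Q → A → Q) (S : Finset Q) : Prop :=
  ∃ w : List A, Finset.univ.image (fun q => dw δ q w) = S

/-- Rank of a word: cardinality of the image of the state set under it. -/
def rkw [Fintype Q] [DecidableEq Q] (δ : Q → A → Q) (w : List A) : ℕ :=
  (Finset.univ.image (fun q => dw δ q w)).card

/-- Rank of a letter. -/
def rkl [Fintype Q] [DecidableEq Q] (δ : Q → A → Q) (a : A) : ℕ :=
  (Finset.univ.image (fun q => δ q a)).card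

/-- A map is a cyclic permutation with a single orbit. -/
def isCyclicPerm (f : Q → Q) : Prop :=
  Function.Bijective f ∧ ∀ p q : Q, ∃ k : ℕ, f^[k] p = q

/-- Two subsets of states are distinguishable in the power automaton:
some word maps exactly one of them to a singleton. -/
def distinguishable [DecidableEq Q] (δ : Q → A → Q) (S T : Finset Q) : Prop :=
  ∃ u : List A,
    Xor' ((S.image (fun q => dw δ q u)).card = 1)
         ((T.image (fun q => dw δ q u)).card = 1)

/-- The set of synchronizing words. -/
def Syn [Fintype Q] [DecidableEq Q] (δ : Q → A → Q) : Set (List A) :=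
  {w | (Finset.univ.image (fun q => dw δ q w)).card = 1}

/-- The Nerode right-congruence of a language. -/
def nerode (L : Set (List A)) : Setoid (List A) where
  r u v := ∀ x : List A, u ++ x ∈ L ↔ v ++ x ∈ L
  iseqv := ⟨fun _ _ => Iff.rfl, fun h x => (h x).symm, fun h1 h2 x => (h1 x).trans (h2 x)⟩

/-- State complexity of a language: number of Nerode classes. -/
noncomputable def sc (L : Set (List A)) : ℕ := Nat.card (Quotient (nerode L))

/-- Complete reachability. -/
def complReach [Fintype Q] [DecidableEq Q] (δ : Q → A → Q) : Prop :=
  ∀ S : Finset Q, S.Nonempty → ∃ w : List A, Finset.univ.image (fun q => dw δ q w) = S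

/-- The permutation group generated by the permutational letters. -/
def permGroup [Fintype Q] [DecidableEq Q] (δ : Q → A → Q) : Subgroup (Equiv.Perm Q) :=
  Subgroup.closure {π : Equiv.Perm Q | ∃ a : A, ∀ q : Q, π q = δ q a}

theorem Setoid.card_quotient_le_card_range {α β : Type*} [Finite β] {s : Setoid α} {f : α → β}
    (hf : ∀ a b, f a = f b → s a b) : Nat.card (Quotient s) ≤ Nat.card (Set.range f) :=
  Nat.card_le_card_of_surjective
    (Quotient.map (sa := Setoid.ker f) id (fun a b hab => hf a b hab) ∘
      (Setoid.quotientKerEquivRange f).symm)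
    ((Quotient.map_surjective _ Function.surjective_id).comp (Equiv.surjective _))

theorem Finset.card_filter_card_ne_one (α : Type*) [Fintype α] [DecidableEq α] :
    #{T : Finset α | T.card ≠ 1} = 2 ^ Fintype.card α - Fintype.card α := by
  have hsingletons : #{T : Finset α | T.card = 1} = Fintype.card α := by
    rw [← powerset_univ, ← powersetCard_eq_filter, card_powersetCard, Nat.choose_one_right,
      card_univ]
  rw [filter_not, card_sdiff_of_subset (filter_subset _ _), hsingletons, card_univ,
    Fintype.card_finset]

theorem dw_append (δ : Q → A → Q) (q : Q) (u v : List A) :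
    dw δ q (u ++ v) = dw δ (dw δ q u) v :=
  List.foldl_append

section SemiAutomaton

variable [Fintype Q] [DecidableEq Q] (δ : Q → A → Q)

def wordImage (w : List A) : Finset Q :=
  univ.image (dw δ · w)

theorem wordImage_append (u v : List A) :
    wordImage δ (u ++ v) = (wordImage δ u).image (dw δ · v) := by
  simp only [wordImage, image_image, Function.comp_def, dw_append]

theorem wordImage_nonempty [Nonempty Q] (w : List A) : (wordImage δ w).Nonempty :=
  univ_nonempty.image _

theorem mem_Syn_iff (w : List A) : w ∈ Syn δ ↔ (wordImage δ w).card = 1 :=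
  Iff.rfl

theorem append_mem_Syn {u : List A} (hu : u ∈ Syn δ) (v : List A) : u ++ v ∈ Syn δ := by
  obtain ⟨p, hp⟩ := card_eq_one.mp ((mem_Syn_iff δ u).mp hu)
  rw [mem_Syn_iff, wordImage_append, hp, image_singleton, card_singleton]

/-- A label of the Nerode class of `w` for `Syn δ`: the image `Q·w`, except that singleton images
are sent to `∅`, which stands for the class of synchronizing words. -/
def collapsedImage (w : List A) : Finset Q :=
  if (wordImage δ w).card = 1 then ∅ else wordImage δ w

theorem collapsedImage_card_ne_one (w : List A) : (collapsedImage δ w).card ≠ 1 := by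
  unfold collapsedImage
  split_ifs with h
  · simp
  · exact h

theorem nerode_Syn_of_collapsedImage_eq [Nonempty Q] {u v : List A}
    (huv : collapsedImage δ u = collapsedImage δ v) : (nerode (Syn δ)).r u v := by
  intro x
  unfold collapsedImage at huv
  split_ifs at huv with hu hv hv
  · exact iff_of_true (append_mem_Syn δ hu x) (append_mem_Syn δ hv x)
  · exact absurd huv.symm (wordImage_nonempty δ v).ne_empty
  · exact absurd huv (wordImage_nonempty δ u).ne_empty
  · rw [mem_Syn_iff, mem_Syn_iff, wordImage_append, wordImage_append, huv]

theorem sc_Syn_le_card_range_collapsedImage [Nonempty Q] :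
    sc (Syn δ) ≤ (Set.range (collapsedImage δ)).ncard :=
  (Setoid.card_quotient_le_card_range fun _ _ => nerode_Syn_of_collapsedImage_eq δ).trans_eq
    (Nat.card_coe_set_eq _)

theorem range_collapsedImage_of_sc_Syn_eq [Nonempty Q]
    (h : sc (Syn δ) = 2 ^ Fintype.card Q - Fintype.card Q) :
    Set.range (collapsedImage δ) = {T | T.card ≠ 1} := by
  have hsub : Set.range (collapsedImage δ) ⊆ {T | T.card ≠ 1} := by
    rintro _ ⟨w, rfl⟩
    exact collapsedImage_card_ne_one δ w
  refine Set.eq_of_subset_of_ncard_le hsub ?_ (Set.toFinite _)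
  calc {T : Finset Q | T.card ≠ 1}.ncard
      = 2 ^ Fintype.card Q - Fintype.card Q := by
        rw [← coe_filter_univ, Set.ncard_coe_finset, card_filter_card_ne_one]
    _ = sc (Syn δ) := h.symm
    _ ≤ (Set.range (collapsedImage δ)).ncard := sc_Syn_le_card_range_collapsedImage δ

theorem reach_of_mem_range_collapsedImage [Nonempty Q] {T : Finset Q}
    (hT : T ∈ Set.range (collapsedImage δ)) (hne : T.Nonempty) : reach δ T := by
  obtain ⟨w, hw⟩ := hT
  unfold collapsedImage at hw
  split_ifs at hw
  · exact absurd hw.symm hne.ne_empty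
  · exact ⟨w, hw⟩

theorem exists_mem_Syn_of_empty_mem_range_collapsedImage [Nonempty Q]
    (h : ∅ ∈ Set.range (collapsedImage δ)) : ∃ w, w ∈ Syn δ := by
  obtain ⟨w, hw⟩ := h
  refine ⟨w, ?_⟩
  unfold collapsedImage at hw
  split_ifs at hw with hsyn
  · exact hsyn
  · exact absurd hw (wordImage_nonempty δ w).ne_empty

theorem reach_singleton_of_strongly_connected {w : List A} (hw : w ∈ Syn δ)
    (hsc : ∀ p q : Q, ∃ u : List A, dw δ p u = q) (q : Q) : reach δ {q} := by
  obtain ⟨p, hp⟩ := card_eq_one.mp ((mem_Syn_iff δ w).mp hw)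
  obtain ⟨u, hu⟩ := hsc p q
  exact ⟨w ++ u, by rw [← wordImage, wordImage_append, hp, image_singleton, hu]⟩

end SemiAutomaton

theorem complReach_of_strongly_connected_sc_max [Fintype Q] [DecidableEq Q]
    (δ : Q → A → Q) (n : ℕ) (hn : Fintype.card Q = n)
    (hsc : ∀ p q : Q, ∃ w : List A, dw δ p w = q)
    (h : sc (Syn δ) = 2 ^ n - n) :
    complReach δ := by
  intro S hS
  have : Nonempty Q := ⟨hS.choose⟩
  subst hn
  have hrange := range_collapsedImage_of_sc_Syn_eq δ h
  by_cases hS1 : S.card = 1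
  · obtain ⟨q, rfl⟩ := card_eq_one.mp hS1
    obtain ⟨w, hw⟩ :=
      exists_mem_Syn_of_empty_mem_range_collapsedImage δ (by simp [hrange])
    exact reach_singleton_of_strongly_connected δ hw hsc q
  · exact reach_of_mem_range_collapsedImage δ (by simpa [hrange] using hS1) hS
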